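/- The star-controlled GCID system with two components, alphabet V = T = {a, b}, axiom ab in component C1, initial and final component C1, and the two insertion rules r1: (1, (a, a, λ)_I, 2) and r2: (2, (b, b, λ)_I, 1) generates exactly the language { aⁿbⁿ : n ≥ 1 }. -/

import Mathlib

/-!
Graph-controlled insertion-deletion (GCID) systems.

Symbols are drawn from the universal symbol set `ℕ`, strings are lists of
symbols.  A GCID system `Π = (k, V, T, A, H, i0, F, R)` has `k` components;
rules `(i, r, j)` move a string from component `i` to component `j`, where
`r` is an insertion rule `(u, η, v)_I` (rewriting `uv → uηv`) or a deletion
rule `(u, δ, v)_D` (rewriting `uδv → uv`), with `u, v ∈ V*` and `η, δ ∈ V⁺`.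
-/

namespace GCIDPaper

/-- Strings over the universal symbol set `ℕ`. -/
abbrev Word : Type := List ℕ

/-- An insertion rule `(u, s, v)_I` (when `isInsertion = true`) or a deletion
rule `(u, s, v)_D` (when `isInsertion = false`), with left context `lctx = u`,
inserted resp. deleted string `core = s`, and right context `rctx = v`. -/
structure InsDelRule : Type where
  isInsertion : Bool
  lctx : Word
  core : Word
  rctx : Word
  deriving DecidableEq

/-- The insertion rule `(u, η, v)_I`. -/
def insRule (u η v : Word) : InsDelRule := ⟨true, u, η, v⟩

/-- The deletion rule `(u, δ, v)_D`. -/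
def delRule (u δ v : Word) : InsDelRule := ⟨false, u, δ, v⟩

/-- Applying a rule to a string: the insertion rule `(u, η, v)_I` corresponds
to the rewriting `uv → uηv`, the deletion rule `(u, δ, v)_D` to `uδv → uv`. -/
def InsDelRule.Applies (r : InsDelRule) (w w' : Word) : Prop :=
  (r.isInsertion = true →
    ∃ x y, w = x ++ r.lctx ++ r.rctx ++ y ∧
      w' = x ++ r.lctx ++ r.core ++ r.rctx ++ y) ∧
  (r.isInsertion = false →
    ∃ x y, w = x ++ r.lctx ++ r.core ++ r.rctx ++ y ∧
      w' = x ++ r.lctx ++ r.rctx ++ y)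

/-- A graph-controlled insertion-deletion system.  The components are
numbered `1, …, k`; `i0` is the initial component, `F` the set of final
components, `axioms` the finite set of axioms (placed in component `i0`),
and `R` the finite set of rules `(i, r, j)`. -/
structure System : Type where
  k : ℕ
  V : Finset ℕ
  T : Finset ℕ
  axioms : Finset Word
  i0 : ℕ
  F : Finset ℕ
  R : Finset (ℕ × InsDelRule × ℕ)
  k_pos : 1 ≤ k
  T_sub_V : T ⊆ V
  axioms_over_V : ∀ w ∈ axioms, ∀ a ∈ w, a ∈ V
  i0_mem : i0 ∈ Finset.Icc 1 k
  F_sub : F ⊆ Finset.Icc 1 k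
  R_wf : ∀ q ∈ R, q.1 ∈ Finset.Icc 1 k ∧ q.2.2 ∈ Finset.Icc 1 k ∧
    q.2.1.core ≠ [] ∧ (∀ a ∈ q.2.1.lctx, a ∈ V) ∧
    (∀ a ∈ q.2.1.core, a ∈ V) ∧ (∀ a ∈ q.2.1.rctx, a ∈ V)

/-- One derivation step between configurations: `(w)_i ⇒ (w')_j` if some rule
`(i, r, j)` of the system applied to `w` yields `w'`. -/
def Step (S : System) (c c' : Word × ℕ) : Prop :=
  ∃ q ∈ S.R, q.1 = c.2 ∧ q.2.2 = c'.2 ∧ q.2.1.Applies c.1 c'.1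

/-- The reflexive-transitive closure `⇒*` of the step relation. -/
def Derives (S : System) : Word × ℕ → Word × ℕ → Prop :=
  Relation.ReflTransGen (Step S)

/-- The language generated:
`L(Π) = { w ∈ T* : (x)_{i0} ⇒* (w)_{i_f} for some axiom x and some i_f ∈ F }`. -/
def language (S : System) : Set Word :=
  { w | (∀ a ∈ w, a ∈ S.T) ∧
    ∃ x ∈ S.axioms, ∃ f ∈ S.F, Derives S (x, S.i0) (w, f) }

/-- A single rule obeys the size bounds `(n, i', i''; m, j', j'')`. -/
def InsDelRule.SizeLE (r : InsDelRule) (n i' i'' m j' j'' : ℕ) : Prop :=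
  (r.isInsertion = true →
    r.core.length ≤ n ∧ r.lctx.length ≤ i' ∧ r.rctx.length ≤ i'') ∧
  (r.isInsertion = false →
    r.core.length ≤ m ∧ r.lctx.length ≤ j' ∧ r.rctx.length ≤ j'')

/-- The system has size `(k; n, i', i''; m, j', j'')`. -/
def HasSize (S : System) (k n i' i'' m j' j'' : ℕ) : Prop :=
  S.k = k ∧ ∀ q ∈ S.R, q.2.1.SizeLE n i' i'' m j' j''

/-- Star-controlled: the underlying undirected control graph (with an edge
`{Ci, Cj}` whenever there is a rule `(i, r, j)`) has exactly the edge set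
`{ {C1, Ci} : 2 ≤ i ≤ k }`; in particular there are no loops. -/
def StarControlled (S : System) : Prop :=
  (∀ q ∈ S.R, ∃ i ∈ Finset.Icc 2 S.k, ({q.1, q.2.2} : Finset ℕ) = {1, i}) ∧
  (∀ i ∈ Finset.Icc 2 S.k, ∃ q ∈ S.R, ({q.1, q.2.2} : Finset ℕ) = {1, i})

/-- The class `GCID(k; n, i', i''; m, j', j'')` of languages generated by GCID
systems of the given size. -/
def GCIDClass (k n i' i'' m j' j'' : ℕ) : Set (Set Word) :=
  { L | ∃ S : System, HasSize S k n i' i'' m j' j'' ∧ language S = L }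

/-- The class `GCID_S(k; n, i', i''; m, j', j'')` of languages generated by
star-controlled GCID systems of the given size. -/
def GCID_S (k n i' i'' m j' j'' : ℕ) : Set (Set Word) :=
  { L | ∃ S : System, StarControlled S ∧ HasSize S k n i' i'' m j' j'' ∧
    language S = L }

/-- The star-controlled GCID system with two components, alphabet
`V = T = {a, b}` (encoded as `a = 0`, `b = 1`), axiom `ab` in component `C1`,
initial and final component `C1`, and the two insertion rules
`r1 : (1, (a, a, λ)_I, 2)` and `r2 : (2, (b, b, λ)_I, 1)`. -/
def anbnPosSystem : System where
  k := 2
  V := {0, 1}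
  T := {0, 1}
  axioms := {[0, 1]}
  i0 := 1
  F := {1}
  R := {(1, insRule [0] [0] [], 2), (2, insRule [1] [1] [], 1)}
  k_pos := by decide
  T_sub_V := by decide
  axioms_over_V := by decide
  i0_mem := by decide
  F_sub := by decide
  R_wf := by decide


/-!
In component `C1` the reachable strings are exactly `aⁿbⁿ` (`n ≥ 1`), and in
component `C2` exactly `aⁿ⁺¹bⁿ`. Since a rule only inserts a copy of a letter
next to an occurrence of that same letter, inserting `a` into `aᵐbⁿ` gives
`aᵐ⁺¹bⁿ` and inserting `b` gives `aᵐbⁿ⁺¹`, wherever the insertion happens;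
the alternation `C1 → C2 → C1` forced by the control graph then keeps the two
exponents in step.
-/

section Duplication

variable {α : Type*} {a b : α} {x y : List α} {m n : ℕ}

theorem append_cons_cons_eq_replicate_succ_append (hab : a ≠ b)
    (h : x ++ a :: y = List.replicate m a ++ List.replicate n b) :
    x ++ a :: a :: y = List.replicate (m + 1) a ++ List.replicate n b := by
  induction x generalizing m with
  | nil => simp [← h, List.replicate_succ]
  | cons c x ih =>
    cases m with
    | zero =>
      have ha : a ∈ List.replicate n b := by
        simpa using congrArg (a ∈ ·) h
      exact absurd (List.eq_of_mem_replicate ha) hab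
    | succ m =>
      rw [List.replicate_succ, List.cons_append, List.cons_append, List.cons.injEq] at h
      obtain ⟨rfl, h⟩ := h
      simp [ih h, List.replicate_succ]

theorem append_cons_cons_eq_replicate_append_succ (hab : a ≠ b)
    (h : x ++ b :: y = List.replicate m a ++ List.replicate n b) :
    x ++ b :: b :: y = List.replicate m a ++ List.replicate (n + 1) b := by
  have hrev : y.reverse ++ b :: x.reverse = List.replicate n b ++ List.replicate m a := by
    simpa using congrArg List.reverse h
  simpa using congrArg List.reverse (append_cons_cons_eq_replicate_succ_append hab.symm hrev)

end Duplication

theorem insRule_applies_iff {u η v w w' : Word} :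
    (insRule u η v).Applies w w' ↔
      ∃ x y, w = x ++ u ++ v ++ y ∧ w' = x ++ u ++ η ++ v ++ y := by
  simp [InsDelRule.Applies, insRule]

theorem mem_anbnPosSystem_R {q : ℕ × InsDelRule × ℕ} :
    q ∈ anbnPosSystem.R ↔ q = (1, insRule [0] [0] [], 2) ∨ q = (2, insRule [1] [1] [], 1) := by
  simp [anbnPosSystem]

theorem anbnPosSystem_starControlled : StarControlled anbnPosSystem := by
  refine ⟨fun q hq => ⟨2, by decide, ?_⟩, fun i hi => ⟨_, mem_anbnPosSystem_R.2 (.inl rfl), ?_⟩⟩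
  · rcases mem_anbnPosSystem_R.1 hq with rfl | rfl <;> decide
  · obtain rfl : i = 2 := by simpa [anbnPosSystem] using hi
    decide

def IsAnbnConfig (c : Word × ℕ) : Prop :=
  (c.2 = 1 ∧ ∃ n, 1 ≤ n ∧ c.1 = List.replicate n 0 ++ List.replicate n 1) ∨
  (c.2 = 2 ∧ ∃ n, 1 ≤ n ∧ c.1 = List.replicate (n + 1) 0 ++ List.replicate n 1)

theorem IsAnbnConfig.step {c c' : Word × ℕ} (hc : IsAnbnConfig c)
    (hs : Step anbnPosSystem c c') : IsAnbnConfig c' := by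
  obtain ⟨q, hq, hsrc, htgt, happ⟩ := hs
  rcases mem_anbnPosSystem_R.1 hq with rfl | rfl
  all_goals
    obtain ⟨x, y, hw, hw'⟩ := insRule_applies_iff.1 happ
    simp only [List.append_nil, List.append_assoc, List.cons_append, List.nil_append] at hw hw'
  · rcases hc with ⟨-, n, hn, hcw⟩ | ⟨hc2, -⟩
    · refine .inr ⟨htgt.symm, n, hn, ?_⟩
      rw [hw', append_cons_cons_eq_replicate_succ_append (by decide) (hw.symm.trans hcw)]
    · exact absurd (hsrc.trans hc2) (by decide)
  · rcases hc with ⟨hc1, -⟩ | ⟨-, n, hn, hcw⟩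
    · exact absurd (hsrc.trans hc1) (by decide)
    · refine .inl ⟨htgt.symm, n + 1, by omega, ?_⟩
      rw [hw', append_cons_cons_eq_replicate_append_succ (by decide) (hw.symm.trans hcw)]

theorem IsAnbnConfig.derives {c c' : Word × ℕ} (hc : IsAnbnConfig c)
    (hd : Derives anbnPosSystem c c') : IsAnbnConfig c' := by
  induction hd with
  | refl => exact hc
  | tail _ hs ih => exact ih.step hs

theorem derives_replicate_append_replicate_succ (n : ℕ) :
    Derives anbnPosSystem (List.replicate (n + 1) 0 ++ List.replicate (n + 1) 1, 1)
      (List.replicate (n + 2) 0 ++ List.replicate (n + 2) 1, 1) := by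
  have insert_a : Step anbnPosSystem
      (List.replicate (n + 1) 0 ++ List.replicate (n + 1) 1, 1)
      (List.replicate (n + 2) 0 ++ List.replicate (n + 1) 1, 2) :=
    ⟨_, mem_anbnPosSystem_R.2 (.inl rfl), rfl, rfl, insRule_applies_iff.2
      ⟨[], List.replicate n 0 ++ List.replicate (n + 1) 1, by simp [List.replicate_succ],
        by simp [List.replicate_succ]⟩⟩
  have insert_b : Step anbnPosSystem
      (List.replicate (n + 2) 0 ++ List.replicate (n + 1) 1, 2)
      (List.replicate (n + 2) 0 ++ List.replicate (n + 2) 1, 1) :=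
    ⟨_, mem_anbnPosSystem_R.2 (.inr rfl), rfl, rfl, insRule_applies_iff.2
      ⟨List.replicate (n + 2) 0, List.replicate n 1, by simp [List.replicate_succ],
        by simp [List.replicate_succ]⟩⟩
  exact .tail (.single insert_a) insert_b

theorem derives_replicate_append_replicate {n : ℕ} (hn : 1 ≤ n) :
    Derives anbnPosSystem ([0, 1], 1) (List.replicate n 0 ++ List.replicate n 1, 1) := by
  induction n, hn using Nat.le_induction with
  | base => exact .refl
  | succ n hn ih =>
    obtain ⟨k, rfl⟩ := Nat.exists_eq_add_of_le' hn
    exact ih.trans (derives_replicate_append_replicate_succ k)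

/-- The system `anbnPosSystem` is star-controlled and generates exactly the
language `{ aⁿbⁿ : n ≥ 1 }`. -/
theorem anbnPosSystem_generates :
    StarControlled anbnPosSystem ∧
      language anbnPosSystem =
        { w : Word | ∃ n : ℕ, 1 ≤ n ∧
          w = List.replicate n 0 ++ List.replicate n 1 } := by
  refine ⟨anbnPosSystem_starControlled, Set.ext fun w => ⟨?_, ?_⟩⟩
  · rintro ⟨-, x, hx, f, hf, hd⟩
    obtain rfl : x = [0, 1] := by simpa [anbnPosSystem] using hx
    obtain rfl : f = 1 := by simpa [anbnPosSystem] using hf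
    have hstart : IsAnbnConfig ([0, 1], 1) := .inl ⟨rfl, 1, le_rfl, rfl⟩
    rcases hstart.derives hd with ⟨-, hw⟩ | ⟨h21, -⟩
    · exact hw
    · simp at h21
  · rintro ⟨n, hn, rfl⟩
    refine ⟨?_, [0, 1], by simp [anbnPosSystem], 1, by simp [anbnPosSystem],
      derives_replicate_append_replicate hn⟩
    simp only [List.mem_append, List.mem_replicate]
    rintro a (⟨-, rfl⟩ | ⟨-, rfl⟩) <;> simp [anbnPosSystem]

end GCIDPaper
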